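/- arXiv:2112.13132 — 2 statements merged into one kernel-verified Lean document; each statement's English description precedes it below -/
import Mathlib

section
/- If A and B are symmetric positive definite n×n matrices, then ‖A^{1/2} − B^{1/2}‖₂² ≤ ‖A − B‖₂² / (λ_min(A^{1/2}) + λ_min(B^{1/2}))², where ‖·‖₂ is the spectral (operator) norm and λ_min the smallest eigenvalue. -/
/-!
Put `D = S_A - S_B`, so that `A - B = S_A D + D S_B`. Take a unit eigenvector `v` of the
symmetric matrix `D` for an eigenvalue `c` of maximal modulus, so that `|c| = ‖D‖₂`. Since `D` is
symmetric, `⟪v, (A - B) v⟫ = c (⟪v, S_A v⟫ + ⟪v, S_B v⟫)`, and the two Rayleigh quotients are at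
least `λ_min(S_A)` and `λ_min(S_B)`. Hence `‖D‖₂ (λ_min(S_A) + λ_min(S_B)) ≤ ‖A - B‖₂`.
-/

open Matrix
open scoped Matrix.Norms.L2Operator

namespace Matrix

section RCLike

open scoped ComplexOrder

variable {𝕜 n : Type*} [RCLike 𝕜] [Fintype n] [DecidableEq n] {A : Matrix n n 𝕜}

theorem IsHermitian.l2_opNorm_eq_norm_eigenvalues (hA : A.IsHermitian) :
    ‖A‖ = ‖hA.eigenvalues‖ := by
  conv_lhs => rw [hA.spectral_theorem, Unitary.conjStarAlgAut_apply, mul_assoc]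
  rw [CStarRing.norm_mem_unitary_mul _ hA.eigenvectorUnitary.2,
    CStarRing.norm_mul_mem_unitary _ (Unitary.star_mem hA.eigenvectorUnitary.2),
    l2_opNorm_diagonal]
  simp [Pi.norm_def]

theorem IsHermitian.exists_abs_eigenvalues_eq_l2_opNorm [Nonempty n] (hA : A.IsHermitian) :
    ∃ i, |hA.eigenvalues i| = ‖A‖ := by
  obtain ⟨i, hi⟩ := Finite.exists_max fun i ↦ |hA.eigenvalues i|
  refine ⟨i, le_antisymm ?_ ?_⟩ <;> rw [hA.l2_opNorm_eq_norm_eigenvalues]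
  · exact norm_le_pi_norm hA.eigenvalues i
  · exact pi_norm_le_iff_of_nonneg (abs_nonneg _) |>.2 hi

theorem IsHermitian.posSemidef_sub_smul_one {a : ℝ} (hA : A.IsHermitian)
    (ha : ∀ i, a ≤ hA.eigenvalues i) : (A - (a : 𝕜) • 1).PosSemidef := by
  set U : Matrix n n 𝕜 := (hA.eigenvectorUnitary : Matrix n n 𝕜)
  have hU : U * Uᴴ = 1 := Unitary.mul_star_self_of_mem hA.eigenvectorUnitary.2
  have hconj : A - (a : 𝕜) • 1 = U * diagonal (fun i ↦ ((hA.eigenvalues i - a : ℝ) : 𝕜)) * Uᴴ := by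
    conv_lhs => rw [hA.spectral_theorem, Unitary.conjStarAlgAut_apply]
    simp only [RCLike.ofReal_sub, ← diagonal_sub, mul_sub, sub_mul, ← smul_one_eq_diagonal,
      mul_smul_comm, smul_mul_assoc, mul_one, hU, star_eq_conjTranspose]
    rfl
  rw [hconj]
  exact (PosSemidef.diagonal fun i ↦ by simpa using ha i).mul_mul_conjTranspose_same U

theorem PosDef.iInf_eigenvalues_pos [Nonempty n] (hA : A.PosDef) :
    0 < ⨅ i, hA.1.eigenvalues i := by
  obtain ⟨i, hi⟩ := exists_eq_ciInf_of_finite (f := hA.1.eigenvalues)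
  exact hi ▸ hA.eigenvalues_pos i

end RCLike

theorem dotProduct_mulVec_mul_self_sub_mul_self {R n : Type*} [CommRing R] [Fintype n]
    {S T : Matrix n n R} {v : n → R} {c : R} (hST : (S - T).IsSymm)
    (hv : (S - T) *ᵥ v = c • v) :
    v ⬝ᵥ ((S * S - T * T) *ᵥ v) = c * (v ⬝ᵥ (S *ᵥ v) + v ⬝ᵥ (T *ᵥ v)) := by
  have hvec : v ᵥ* (S - T) = c • v := by rw [← mulVec_transpose, hST.eq, hv]
  have hsplit : S * S - T * T = S * (S - T) + (S - T) * T := by noncomm_ring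
  rw [hsplit, add_mulVec, ← mulVec_mulVec, ← mulVec_mulVec, hv, dotProduct_add,
    dotProduct_mulVec v (S - T), hvec, mulVec_smul, dotProduct_smul, smul_dotProduct,
    smul_eq_mul, smul_eq_mul, mul_add]

section Real

variable {n : Type*} [Fintype n] [DecidableEq n]

theorem abs_dotProduct_mulVec_le (M : Matrix n n ℝ) (x : EuclideanSpace ℝ n) :
    |x ⬝ᵥ (M *ᵥ x)| ≤ ‖M‖ * ‖x‖ ^ 2 := by
  calc |x ⬝ᵥ (M *ᵥ x)| = |inner ℝ x ((EuclideanSpace.equiv n ℝ).symm (M *ᵥ x))| := by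
        simp [EuclideanSpace.inner_eq_star_dotProduct, dotProduct_comm]
    _ ≤ ‖x‖ * ‖(EuclideanSpace.equiv n ℝ).symm (M *ᵥ x)‖ := abs_real_inner_le_norm _ _
    _ ≤ ‖x‖ * (‖M‖ * ‖x‖) := by gcongr; exact M.l2_opNorm_mulVec x
    _ = ‖M‖ * ‖x‖ ^ 2 := by ring

theorem IsHermitian.mul_dotProduct_self_le {A : Matrix n n ℝ} {a : ℝ} (hA : A.IsHermitian)
    (ha : ∀ i, a ≤ hA.eigenvalues i) (x : n → ℝ) : a * (x ⬝ᵥ x) ≤ x ⬝ᵥ (A *ᵥ x) := by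
  have hx := (hA.posSemidef_sub_smul_one ha).dotProduct_mulVec_nonneg x
  simp only [sub_mulVec, smul_mulVec, one_mulVec, dotProduct_sub, dotProduct_smul, star_trivial,
    RCLike.ofReal_real_eq_id, id, smul_eq_mul] at hx
  linarith

theorem IsHermitian.l2_opNorm_sub_mul_le [Nonempty n] {S T : Matrix n n ℝ}
    (hS : S.IsHermitian) (hT : T.IsHermitian) {a b : ℝ}
    (ha : ∀ i, a ≤ hS.eigenvalues i) (hb : ∀ i, b ≤ hT.eigenvalues i) :
    ‖S - T‖ * (a + b) ≤ ‖S * S - T * T‖ := by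
  have hST := hS.sub hT
  obtain ⟨i, hi⟩ := hST.exists_abs_eigenvalues_eq_l2_opNorm
  set c := hST.eigenvalues i
  set v := hST.eigenvectorBasis i
  have hv : ‖v‖ = 1 := hST.eigenvectorBasis.orthonormal.1 i
  have hvv : v ⬝ᵥ v = 1 := by
    have := real_inner_self_eq_norm_sq v
    rw [hv, EuclideanSpace.inner_eq_star_dotProduct] at this
    simpa using this
  have hqS : a ≤ v ⬝ᵥ (S *ᵥ v) := by simpa [hvv] using hS.mul_dotProduct_self_le ha v
  have hqT : b ≤ v ⬝ᵥ (T *ᵥ v) := by simpa [hvv] using hT.mul_dotProduct_self_le hb v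
  have hq := dotProduct_mulVec_mul_self_sub_mul_self (isHermitian_iff_isSymm.mp hST)
    (hST.mulVec_eigenvectorBasis i)
  calc ‖S - T‖ * (a + b) = |c| * (a + b) := by rw [hi]
    _ ≤ |c| * |v ⬝ᵥ (S *ᵥ v) + v ⬝ᵥ (T *ᵥ v)| := by
        gcongr; exact (add_le_add hqS hqT).trans (le_abs_self _)
    _ = |v ⬝ᵥ ((S * S - T * T) *ᵥ v)| := by rw [hq, abs_mul]
    _ ≤ ‖S * S - T * T‖ := by simpa [hv] using abs_dotProduct_mulVec_le (S * S - T * T) v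

end Real

end Matrix

theorem sqrt_matrix_opNorm_estimate_general {n : ℕ} (hn : 0 < n)
    (A B SA SB : Matrix (Fin n) (Fin n) ℝ)
    (hSA : SA.PosDef) (hSB : SB.PosDef)
    (hSA2 : SA * SA = A) (hSB2 : SB * SB = B) :
    ‖SA - SB‖ ^ 2 ≤
      ‖A - B‖ ^ 2 /
        ((⨅ i, hSA.1.eigenvalues i) + ⨅ i, hSB.1.eigenvalues i) ^ 2 := by
  have : Nonempty (Fin n) := Fin.pos_iff_nonempty.mp hn
  have hpos := add_pos hSA.iInf_eigenvalues_pos hSB.iInf_eigenvalues_pos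
  have key := hSA.1.l2_opNorm_sub_mul_le hSB.1 (fun i ↦ ciInf_le (Finite.bddBelow_range _) i)
    (fun i ↦ ciInf_le (Finite.bddBelow_range _) i)
  rw [hSA2, hSB2, ← le_div_iff₀ hpos] at key
  rw [← div_pow]
  gcongr

/-- For symmetric positive definite matrices `A`, `B` with symmetric positive definite square
roots `S_A`, `S_B`, one has
`‖A^{1/2} - B^{1/2}‖₂² ≤ ‖A - B‖₂² / (λ_min(A^{1/2}) + λ_min(B^{1/2}))²`,
where `‖·‖₂` is the spectral norm. -/
theorem sqrt_matrix_opNorm_estimate {n : ℕ} (hn : 0 < n)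
    (A B SA SB : Matrix (Fin n) (Fin n) ℝ)
    (hA : A.PosDef) (hB : B.PosDef) (hSA : SA.PosDef) (hSB : SB.PosDef)
    (hSA2 : SA * SA = A) (hSB2 : SB * SB = B) :
    ‖SA - SB‖ ^ 2 ≤
      ‖A - B‖ ^ 2 /
        ((⨅ i, hSA.1.eigenvalues i) + ⨅ i, hSB.1.eigenvalues i) ^ 2 :=
  sqrt_matrix_opNorm_estimate_general hn A B SA SB hSA hSB hSA2 hSB2
end

section
/- Fix q ≥ 2, ε > 0, points x, x_ε ∈ ℝⁿ with x ≠ x_ε, and set Φ(y, z) := |y − z|^q/(q ε^{q−1}). Suppose symmetric n×n matrices Y, Z satisfy the block matrix inequality ((−Y, 0), (0, Z)) ≤ D²Φ(x_ε, x) + ε^{q−1} (D²Φ(x_ε, x))². Then for all ξ, η ∈ ℝⁿ: Zξ·ξ − Yη·η ≤ ε^{1−q} [ (q−1)|x_ε − x|^{q−2} + 2(q−1)² |x_ε − x|^{2(q−2)} ] |η − ξ|². -/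
open Matrix

/-- The Euclidean norm of a vector in `Fin n → ℝ`. -/
noncomputable def euclNorm {n : ℕ} (a : Fin n → ℝ) : ℝ := Real.sqrt (a ⬝ᵥ a)

/-- The Hessian of `Φ(y,z) = |y-z|^q/(q ε^{q-1})` at `(xε, x)`, as a `2n × 2n` block matrix. -/
noncomputable def hessPhi {n : ℕ} (q ε : ℝ) (xε x : Fin n → ℝ) :
    Matrix (Fin n ⊕ Fin n) (Fin n ⊕ Fin n) ℝ :=
  (ε ^ (1 - q) * euclNorm (xε - x) ^ (q - 4)) •
    ((euclNorm (xε - x) ^ (2:ℝ)) • fromBlocks 1 (-1) (-1) 1 +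
      (q - 2) • fromBlocks (vecMulVec (xε - x) (xε - x)) (-(vecMulVec (xε - x) (xε - x)))
        (-(vecMulVec (xε - x) (xε - x))) (vecMulVec (xε - x) (xε - x)))


/-!
Both `D²Φ(xε, x)` and its square are block matrices of quadratic forms
`(y, z) ↦ (y - z)ᵀ M (y - z)`, where `M = ε^{1-q}|w|^{q-4}(|w|² I + (q-2) w wᵀ)` is the Hessian
of `w ↦ |w|^q/(q ε^{q-1})` at `w = xε - x` (and `2M²` plays this role for the square). Testing the
matrix inequality on `(η, ξ)` therefore gives `Zξ·ξ - Yη·η ≤ uᵀMu + 2ε^{q-1}|Mu|²` with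
`u = η - ξ`. By Cauchy–Schwarz the largest eigenvalue of `M` is `(q-1)ε^{1-q}|w|^{q-2}`, attained
along `w`, and this bounds both terms.
-/

section DiffBlock

variable {ι R : Type*} [CommRing R]

def diffBlock (M : Matrix ι ι R) : Matrix (ι ⊕ ι) (ι ⊕ ι) R := fromBlocks M (-M) (-M) M

lemma diffBlock_add (M N : Matrix ι ι R) : diffBlock (M + N) = diffBlock M + diffBlock N := by
  simp only [diffBlock, fromBlocks_add, neg_add]

lemma diffBlock_smul (c : R) (M : Matrix ι ι R) : diffBlock (c • M) = c • diffBlock M := by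
  simp only [diffBlock, fromBlocks_smul, smul_neg]

variable [Fintype ι]

lemma diffBlock_mul (M N : Matrix ι ι R) :
    diffBlock M * diffBlock N = diffBlock (2 • (M * N)) := by
  simp only [diffBlock, fromBlocks_multiply, neg_mul, mul_neg, neg_neg, two_nsmul, neg_add]

lemma dotProduct_diffBlock_mulVec (M : Matrix ι ι R) (y z : ι → R) :
    Sum.elim y z ⬝ᵥ (diffBlock M *ᵥ Sum.elim y z) = (y - z) ⬝ᵥ (M *ᵥ (y - z)) := by
  simp only [diffBlock, fromBlocks_mulVec, Sum.elim_comp_inl, Sum.elim_comp_inr,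
    sumElim_dotProduct_sumElim, neg_mulVec, mulVec_sub, sub_dotProduct, dotProduct_sub,
    dotProduct_add, dotProduct_neg]
  ring

lemma dotProduct_mul_self_mulVec {M : Matrix ι ι R} (hM : M.IsSymm) (u : ι → R) :
    u ⬝ᵥ ((M * M) *ᵥ u) = (M *ᵥ u) ⬝ᵥ (M *ᵥ u) := by
  rw [← mulVec_mulVec, dotProduct_mulVec, ← mulVec_transpose, hM.eq]

end DiffBlock

section DotProduct

variable {ι R : Type*} [Fintype ι] [CommRing R] [LinearOrder R] [IsStrictOrderedRing R]

lemma dotProduct_self_nonneg (u : ι → R) : 0 ≤ u ⬝ᵥ u :=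
  Finset.sum_nonneg fun _ _ => mul_self_nonneg _

lemma sq_dotProduct_le (w u : ι → R) : (w ⬝ᵥ u) ^ 2 ≤ (w ⬝ᵥ w) * (u ⬝ᵥ u) := by
  simpa only [dotProduct, pow_two] using Finset.sum_mul_sq_le_sq_mul_sq Finset.univ w u

end DotProduct

section RadialMatrix

variable {ι R : Type*} [Fintype ι] [DecidableEq ι] [CommRing R]

def radialMatrix (a k : R) (w : ι → R) : Matrix ι ι R :=
  a • ((w ⬝ᵥ w) • 1 + k • vecMulVec w w)

lemma radialMatrix_isSymm (a k : R) (w : ι → R) : (radialMatrix a k w).IsSymm := by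
  simp only [radialMatrix, IsSymm, transpose_smul, transpose_add, transpose_one,
    transpose_vecMulVec]

lemma radialMatrix_mulVec (a k : R) (w u : ι → R) :
    radialMatrix a k w *ᵥ u = a • ((w ⬝ᵥ w) • u + (k * (w ⬝ᵥ u)) • w) := by
  simp only [radialMatrix, smul_mulVec, add_mulVec, one_mulVec, vecMulVec_mulVec,
    op_smul_eq_smul, smul_smul]

variable [LinearOrder R] [IsStrictOrderedRing R] {a k : R} (w u : ι → R)

lemma dotProduct_radialMatrix_mulVec_le (ha : 0 ≤ a) (hk : 0 ≤ k) :
    u ⬝ᵥ (radialMatrix a k w *ᵥ u) ≤ a * (1 + k) * (w ⬝ᵥ w) * (u ⬝ᵥ u) := by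
  have hgap : 0 ≤ a * k * ((w ⬝ᵥ w) * (u ⬝ᵥ u) - (w ⬝ᵥ u) ^ 2) :=
    mul_nonneg (mul_nonneg ha hk) (sub_nonneg.mpr (sq_dotProduct_le w u))
  simp only [radialMatrix_mulVec, dotProduct_smul, dotProduct_add, smul_eq_mul,
    dotProduct_comm u w]
  linear_combination hgap

lemma radialMatrix_mulVec_dotProduct_self_le (hk : 0 ≤ k) :
    (radialMatrix a k w *ᵥ u) ⬝ᵥ (radialMatrix a k w *ᵥ u) ≤
      (a * (1 + k) * (w ⬝ᵥ w)) ^ 2 * (u ⬝ᵥ u) := by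
  have hgap : 0 ≤ a ^ 2 * k * (2 + k) * (w ⬝ᵥ w) * ((w ⬝ᵥ w) * (u ⬝ᵥ u) - (w ⬝ᵥ u) ^ 2) := by
    have := dotProduct_self_nonneg w
    have := sub_nonneg.mpr (sq_dotProduct_le w u)
    have : 0 ≤ 2 + k := by linarith
    positivity
  simp only [radialMatrix_mulVec, dotProduct_smul, smul_dotProduct, dotProduct_add,
    add_dotProduct, smul_eq_mul, dotProduct_comm u w]
  linear_combination hgap

lemma dotProduct_radialMatrix_mulVec_add_le {b c : R} (ha : 0 ≤ a) (hk : 0 ≤ k) (hc : 0 ≤ c)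
    (hb : a * (1 + k) * (w ⬝ᵥ w) ≤ b) :
    u ⬝ᵥ (radialMatrix a k w *ᵥ u) + c * ((radialMatrix a k w *ᵥ u) ⬝ᵥ (radialMatrix a k w *ᵥ u)) ≤
      (b + c * b ^ 2) * (u ⬝ᵥ u) := by
  have hγ := dotProduct_self_nonneg w
  have hα := dotProduct_self_nonneg u
  have hb₀ : 0 ≤ a * (1 + k) * (w ⬝ᵥ w) := by positivity
  calc _ ≤ a * (1 + k) * (w ⬝ᵥ w) * (u ⬝ᵥ u) + c * ((a * (1 + k) * (w ⬝ᵥ w)) ^ 2 * (u ⬝ᵥ u)) := by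
        gcongr
        exacts [dotProduct_radialMatrix_mulVec_le w u ha hk,
          radialMatrix_mulVec_dotProduct_self_le w u hk]
    _ ≤ b * (u ⬝ᵥ u) + c * (b ^ 2 * (u ⬝ᵥ u)) := by gcongr
    _ = (b + c * b ^ 2) * (u ⬝ᵥ u) := by ring

end RadialMatrix

lemma quadForm_sub_le_of_posSemidef {ι : Type*} [Fintype ι] {M Y Z : Matrix ι ι ℝ}
    (hM : M.IsSymm) {c : ℝ}
    (h : (diffBlock M + c • (diffBlock M * diffBlock M) - fromBlocks (-Y) 0 0 Z).PosSemidef)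
    (ξ η : ι → ℝ) :
    Z *ᵥ ξ ⬝ᵥ ξ - Y *ᵥ η ⬝ᵥ η ≤
      (η - ξ) ⬝ᵥ (M *ᵥ (η - ξ)) + 2 * c * ((M *ᵥ (η - ξ)) ⬝ᵥ (M *ᵥ (η - ξ))) := by
  have key := h.dotProduct_mulVec_nonneg (Sum.elim η ξ)
  rw [diffBlock_mul, ← diffBlock_smul, ← diffBlock_add, star_trivial, sub_mulVec,
    dotProduct_sub, dotProduct_diffBlock_mulVec, add_mulVec, dotProduct_add, smul_mulVec,
    dotProduct_smul, smul_mulVec, dotProduct_smul, dotProduct_mul_self_mulVec hM,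
    fromBlocks_mulVec] at key
  simp only [Sum.elim_comp_inl, Sum.elim_comp_inr, sumElim_dotProduct_sumElim, zero_mulVec,
    add_zero, zero_add, neg_mulVec, dotProduct_neg, smul_eq_mul, nsmul_eq_mul] at key
  rw [dotProduct_comm (Z *ᵥ ξ), dotProduct_comm (Y *ᵥ η)]
  push_cast at key
  linarith

lemma euclNorm_rpow_two {n : ℕ} (a : Fin n → ℝ) : euclNorm a ^ (2 : ℝ) = a ⬝ᵥ a := by
  rw [Real.rpow_two, euclNorm, Real.sq_sqrt (dotProduct_self_nonneg a)]

lemma euclNorm_rpow_mul_dotProduct_self_le {n : ℕ} (w : Fin n → ℝ) (p : ℝ) :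
    euclNorm w ^ p * (w ⬝ᵥ w) ≤ euclNorm w ^ (p + 2) := by
  rw [← euclNorm_rpow_two]
  exact Real.le_rpow_add (Real.sqrt_nonneg _) _ _

lemma hessPhi_eq_diffBlock {n : ℕ} (q ε : ℝ) (xε x : Fin n → ℝ) :
    hessPhi q ε xε x =
      diffBlock (radialMatrix (ε ^ (1 - q) * euclNorm (xε - x) ^ (q - 4)) (q - 2) (xε - x)) := by
  rw [radialMatrix, diffBlock_smul, diffBlock_add, diffBlock_smul, diffBlock_smul, hessPhi,
    euclNorm_rpow_two]
  rfl

lemma rpow_sub_one_mul_sq_rpow_one_sub_mul_rpow {ε N : ℝ} (hε : 0 < ε) (hN : 0 ≤ N) (q : ℝ) :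
    ε ^ (q - 1) * (ε ^ (1 - q) * N ^ (q - 2)) ^ 2 = ε ^ (1 - q) * N ^ (2 * (q - 2)) := by
  have hε_inv : ε ^ (q - 1) * ε ^ (1 - q) = 1 := by
    rw [← Real.rpow_add hε, show q - 1 + (1 - q) = 0 by ring, Real.rpow_zero]
  rw [show 2 * (q - 2) = (q - 2) * (2 : ℕ) by push_cast; ring, Real.rpow_mul_natCast hN]
  linear_combination (ε ^ (1 - q) * (N ^ (q - 2)) ^ 2) * hε_inv

theorem jets_quadratic_estimate_general {n : ℕ} (q ε : ℝ) (hq : 2 ≤ q) (hε : 0 < ε)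
    (x xε : Fin n → ℝ)
    (Y Z : Matrix (Fin n) (Fin n) ℝ)
    (hblock : (hessPhi q ε xε x + ε ^ (q - 1) • (hessPhi q ε xε x * hessPhi q ε xε x) -
        fromBlocks (-Y) 0 0 Z).PosSemidef) :
    ∀ ξ η : Fin n → ℝ,
      Z *ᵥ ξ ⬝ᵥ ξ - Y *ᵥ η ⬝ᵥ η ≤
        ε ^ (1 - q) * ((q - 1) * euclNorm (xε - x) ^ (q - 2) +
          2 * (q - 1) ^ 2 * euclNorm (xε - x) ^ (2 * (q - 2))) * ((η - ξ) ⬝ᵥ (η - ξ)) := by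
  intro ξ η
  refine (quadForm_sub_le_of_posSemidef (radialMatrix_isSymm _ _ _)
    (hessPhi_eq_diffBlock q ε xε x ▸ hblock) ξ η).trans ?_
  set w := xε - x
  set N := euclNorm w
  set μ := ε ^ (1 - q) * N ^ (q - 2)
  have hN : 0 ≤ N := Real.sqrt_nonneg _
  have hcoeff : ε ^ (1 - q) * N ^ (q - 4) * (1 + (q - 2)) * (w ⬝ᵥ w) ≤ (q - 1) * μ := by
    have hpow := euclNorm_rpow_mul_dotProduct_self_le w (q - 4)
    rw [show q - 4 + 2 = q - 2 by ring] at hpow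
    calc _ = (q - 1) * ε ^ (1 - q) * (N ^ (q - 4) * (w ⬝ᵥ w)) := by ring
      _ ≤ (q - 1) * ε ^ (1 - q) * N ^ (q - 2) := by
          have : 0 ≤ q - 1 := by linarith
          gcongr
      _ = (q - 1) * μ := by ring
  refine (dotProduct_radialMatrix_mulVec_add_le w (η - ξ) (by positivity) (by linarith)
    (by positivity) hcoeff).trans_eq ?_
  linear_combination 2 * (q - 1) ^ 2 * ((η - ξ) ⬝ᵥ (η - ξ)) * rpow_sub_one_mul_sq_rpow_one_sub_mul_rpow hε hN q

/-- From the matrix inequality of the theorem on sums (maximum principle for semicontinuous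
functions) applied to `Φ`, one deduces the quadratic form estimate
`Zξ·ξ - Yη·η ≤ ε^{1-q}[(q-1)|xε-x|^{q-2} + 2(q-1)²|xε-x|^{2(q-2)}]|η-ξ|²`. -/
theorem jets_quadratic_estimate {n : ℕ} (q ε : ℝ) (hq : 2 ≤ q) (hε : 0 < ε)
    (x xε : Fin n → ℝ) (hne : x ≠ xε)
    (Y Z : Matrix (Fin n) (Fin n) ℝ) (hY : Y.IsSymm) (hZ : Z.IsSymm)
    (hblock : (hessPhi q ε xε x + ε ^ (q - 1) • (hessPhi q ε xε x * hessPhi q ε xε x) -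
        fromBlocks (-Y) 0 0 Z).PosSemidef) :
    ∀ ξ η : Fin n → ℝ,
      Z *ᵥ ξ ⬝ᵥ ξ - Y *ᵥ η ⬝ᵥ η ≤
        ε ^ (1 - q) * ((q - 1) * euclNorm (xε - x) ^ (q - 2) +
          2 * (q - 1) ^ 2 * euclNorm (xε - x) ^ (2 * (q - 2))) * ((η - ξ) ⬝ᵥ (η - ξ)) :=
  jets_quadratic_estimate_general q ε hq hε x xε Y Z hblock
end
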